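/- arXiv:1903.04712 — 3 statements merged into one kernel-verified Lean document; each statement's English description precedes it below -/
import Mathlib

section
/- Generalized Weitzenböck identity (algebraic form of Theorem 1). Let R be a commutative ring, M an R-module, D : M →ₗ[R] M a linear endomorphism, ι a finite index type, I : ι → (M →ₗ[R] M) a family of endomorphisms, and η : ι → ι → R a symmetric matrix (η a b = η b a). Define the raised family I' a := Σ_b (η a b) • (I b), the generalized Lie derivatives 𝔇 a := (I a) ∘ D + D ∘ (I a) and 𝔇' a := (I' a) ∘ D + D ∘ (I' a), and the generalized coderivative D‡ := − Σ_a (I a) ∘ D ∘ (I' a). If Σ_a (I a) ∘ (I' a) = 0, then D‡ ∘ D + D ∘ D‡ = − Σ_a (𝔇 a) ∘ (𝔇' a) + Σ_a (I a) ∘ D ∘ D ∘ (I' a). -/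
/-! Expanding each product `(I_a D + D I_a)(I'_a D + D I'_a)` gives four terms; the one with
`I_a I'_a` in the middle sums to `D (Σ_a I_a I'_a) D = 0`, and the remaining two mixed terms
are exactly `-(D‡ D + D D‡)`. -/

section Weitzenboeck

variable {A ι : Type*} [Ring A]

theorem anticommutator_mul_anticommutator (d x y : A) :
    (x * d + d * x) * (y * d + d * y) =
      x * d * y * d + x * d * d * y + d * (x * y) * d + d * (x * d * y) := by
  noncomm_ring

theorem sum_anticommutator_mul_anticommutator_of_sum_mul_eq_zero (s : Finset ι) (d : A)
    (x y : ι → A) (h : ∑ a ∈ s, x a * y a = 0) :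
    ∑ a ∈ s, (x a * d + d * x a) * (y a * d + d * y a) =
      (∑ a ∈ s, x a * d * y a) * d + ∑ a ∈ s, x a * d * d * y a +
        d * ∑ a ∈ s, x a * d * y a := by
  simp only [anticommutator_mul_anticommutator, Finset.sum_add_distrib, ← Finset.sum_mul,
    ← Finset.mul_sum, h, mul_zero, zero_mul, add_zero]

theorem weitzenboeck_identity (s : Finset ι) (d : A) (x y : ι → A)
    (h : ∑ a ∈ s, x a * y a = 0) :
    (-∑ a ∈ s, x a * d * y a) * d + d * (-∑ a ∈ s, x a * d * y a) =
      -∑ a ∈ s, (x a * d + d * x a) * (y a * d + d * y a) + ∑ a ∈ s, x a * d * d * y a := by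
  rw [sum_anticommutator_mul_anticommutator_of_sum_mul_eq_zero s d x y h]
  noncomm_ring

end Weitzenboeck

theorem generalized_weitzenboeck_general
    {R M : Type*} [CommRing R] [AddCommGroup M] [Module R M]
    {ι : Type*} [Fintype ι]
    (D : M →ₗ[R] M) (I : ι → M →ₗ[R] M)
    (I' 𝔇 𝔇' : ι → M →ₗ[R] M) (Ddag : M →ₗ[R] M)
    (h𝔇 : ∀ a, 𝔇 a = I a ∘ₗ D + D ∘ₗ I a)
    (h𝔇' : ∀ a, 𝔇' a = I' a ∘ₗ D + D ∘ₗ I' a)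
    (hDdag : Ddag = -∑ a, I a ∘ₗ D ∘ₗ I' a)
    (hzero : ∑ a, I a ∘ₗ I' a = 0) :
    Ddag ∘ₗ D + D ∘ₗ Ddag =
      -∑ a, 𝔇 a ∘ₗ 𝔇' a + ∑ a, I a ∘ₗ D ∘ₗ D ∘ₗ I' a := by
  simp only [hDdag, h𝔇, h𝔇', ← Module.End.mul_eq_comp] at hzero ⊢
  simpa only [mul_assoc] using weitzenboeck_identity Finset.univ D I I' hzero

/-- Generalized Weitzenböck identity (algebraic form of Theorem 1).
With `I' a = Σ_b (η a b) • I b`, `𝔇 a = I a ∘ D + D ∘ I a`,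
`𝔇' a = I' a ∘ D + D ∘ I' a`, and `Ddag = − Σ_a I a ∘ D ∘ I' a`,
if `Σ_a I a ∘ I' a = 0` then
`Ddag ∘ D + D ∘ Ddag = − Σ_a 𝔇 a ∘ 𝔇' a + Σ_a I a ∘ D ∘ D ∘ I' a`. -/
theorem generalized_weitzenboeck
    {R M : Type*} [CommRing R] [AddCommGroup M] [Module R M]
    {ι : Type*} [Fintype ι]
    (D : M →ₗ[R] M) (I : ι → M →ₗ[R] M) (η : ι → ι → R)
    (hη : ∀ a b, η a b = η b a)
    (I' 𝔇 𝔇' : ι → M →ₗ[R] M) (Ddag : M →ₗ[R] M)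
    (hI' : ∀ a, I' a = ∑ b, η a b • I b)
    (h𝔇 : ∀ a, 𝔇 a = I a ∘ₗ D + D ∘ₗ I a)
    (h𝔇' : ∀ a, 𝔇' a = I' a ∘ₗ D + D ∘ₗ I' a)
    (hDdag : Ddag = -∑ a, I a ∘ₗ D ∘ₗ I' a)
    (hzero : ∑ a, I a ∘ₗ I' a = 0) :
    Ddag ∘ₗ D + D ∘ₗ Ddag =
      -∑ a, 𝔇 a ∘ₗ 𝔇' a + ∑ a, I a ∘ₗ D ∘ₗ D ∘ₗ I' a :=
  generalized_weitzenboeck_general D I I' 𝔇 𝔇' Ddag h𝔇 h𝔇' hDdag hzero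
end

section
/- Let R be a commutative ring, M an R-module, and A, B, D : M →ₗ[R] M linear endomorphisms with A ∘ B + B ∘ A = 0. Define 𝒟_A := A ∘ D + D ∘ A and 𝒟_B := B ∘ D + D ∘ B. Then 𝒟_A ∘ 𝒟_B − 𝒟_B ∘ 𝒟_A = B ∘ A ∘ D ∘ D + D ∘ D ∘ B ∘ A + A ∘ D ∘ D ∘ B − B ∘ D ∘ D ∘ A + D ∘ (A ∘ 𝒟_B − 𝒟_B ∘ A) + (A ∘ 𝒟_B − 𝒟_B ∘ A) ∘ D. -/
theorem commutator_anticommutators_eq {S : Type*} [Ring S] (a b d : S) :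
    (a * d + d * a) * (b * d + d * b) - (b * d + d * b) * (a * d + d * a) =
      b * a * d * d + d * d * b * a + a * d * d * b - b * d * d * a +
        d * (a * (b * d + d * b) - (b * d + d * b) * a) +
        (a * (b * d + d * b) - (b * d + d * b) * a) * d - (a * b + b * a) * d * d := by
  noncomm_ring

/-- Algebraic core of the commutator formula for two generalized Lie
derivatives `𝒟_A = A ∘ D + D ∘ A`, `𝒟_B = B ∘ D + D ∘ B`, assuming
`A ∘ B + B ∘ A = 0`. -/
theorem lie_commutator
    {R M : Type*} [CommRing R] [AddCommGroup M] [Module R M]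
    (A B D : M →ₗ[R] M) (hAB : A ∘ₗ B + B ∘ₗ A = 0) :
    (A ∘ₗ D + D ∘ₗ A) ∘ₗ (B ∘ₗ D + D ∘ₗ B) -
      (B ∘ₗ D + D ∘ₗ B) ∘ₗ (A ∘ₗ D + D ∘ₗ A) =
    B ∘ₗ A ∘ₗ D ∘ₗ D + D ∘ₗ D ∘ₗ B ∘ₗ A +
      A ∘ₗ D ∘ₗ D ∘ₗ B - B ∘ₗ D ∘ₗ D ∘ₗ A +
      D ∘ₗ (A ∘ₗ (B ∘ₗ D + D ∘ₗ B) - (B ∘ₗ D + D ∘ₗ B) ∘ₗ A) +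
      (A ∘ₗ (B ∘ₗ D + D ∘ₗ B) - (B ∘ₗ D + D ∘ₗ B) ∘ₗ A) ∘ₗ D := by
  simp only [← Module.End.mul_eq_comp] at hAB ⊢
  simpa only [hAB, zero_mul, sub_zero, mul_assoc] using commutator_anticommutators_eq A B D
end

section
/- Operator inversion formula (abstract form of Lemma 2). Let R be a commutative ring, M an R-module, ι a finite index type, ε, I : ι → (M →ₗ[R] M) two families of endomorphisms, and D : M →ₗ[R] M. Define N := Σ_a (ε a) ∘ (I a), the generalized Lie derivatives 𝔇 a := (I a) ∘ D + D ∘ (I a), and τ a := D ∘ (ε a) + (ε a) ∘ D. If N ∘ D − D ∘ N = D, then D = Σ_a (ε a) ∘ (𝔇 a) − Σ_a (τ a) ∘ (I a). -/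
/-! Expanding the anticommutators, the terms `ε a * D * I a` cancel between the two sums,
leaving `(Σ_a ε a * I a) * D - D * (Σ_a ε a * I a) = N D - D N`, which is `D` by hypothesis. -/

open Finset

theorem Finset.sum_mul_anticomm_sub_sum_anticomm_mul {A ι : Type*} [NonUnitalRing A]
    (s : Finset ι) (ε I : ι → A) (D : A) :
    ∑ a ∈ s, ε a * (I a * D + D * I a) - ∑ a ∈ s, (D * ε a + ε a * D) * I a =
      (∑ a ∈ s, ε a * I a) * D - D * ∑ a ∈ s, ε a * I a := by
  simp only [mul_add, add_mul, sum_add_distrib, sum_mul, mul_sum, mul_assoc]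
  abel

/-- Operator inversion formula (abstract form of Lemma 2): with
`N = Σ_a ε a ∘ I a`, `𝔇 a = I a ∘ D + D ∘ I a`, `τ a = D ∘ ε a + ε a ∘ D`,
if `N ∘ D − D ∘ N = D` then `D = Σ_a ε a ∘ 𝔇 a − Σ_a τ a ∘ I a`. -/
theorem operator_inversion
    {R M : Type*} [CommRing R] [AddCommGroup M] [Module R M]
    {ι : Type*} [Fintype ι]
    (ε I : ι → M →ₗ[R] M) (D : M →ₗ[R] M)
    (N : M →ₗ[R] M) (𝔇 τ : ι → M →ₗ[R] M)
    (hN : N = ∑ a, ε a ∘ₗ I a)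
    (h𝔇 : ∀ a, 𝔇 a = I a ∘ₗ D + D ∘ₗ I a)
    (hτ : ∀ a, τ a = D ∘ₗ ε a + ε a ∘ₗ D)
    (hcomm : N ∘ₗ D - D ∘ₗ N = D) :
    D = ∑ a, ε a ∘ₗ 𝔇 a - ∑ a, τ a ∘ₗ I a := by
  simp only [hN, h𝔇, hτ, ← Module.End.mul_eq_comp] at hcomm ⊢
  rw [sum_mul_anticomm_sub_sum_anticomm_mul, hcomm]
end
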